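/- Let p₀ and p₁ be purely imaginary unit quaternions with p₁ ≠ p₀ and p₁ ≠ −p₀, let r := Dihedral(p₀,p₁), and let v := arccos(⟨p₀,p₁⟩) • ((p₀×p₁)/‖p₀×p₁‖), so that exp((1/2) • v) = r. Let γ̃ : ℝ → ℍ be continuously differentiable on [0,1] such that for every t ∈ [0,1], ‖γ̃(t)‖ = 1 and γ̃(t) * 𝕚 * conj(γ̃(t)) = exp((t/2) • v) * p₀ * exp(−(t/2) • v) (i.e., γ̃ is a lift of the great circular arc from p₀ to p₁ through the Hopf map). Then exp((∫₀¹ Re(𝕚 * conj(γ̃(t)) * γ̃'(t)) dt) • 𝕚) = conj(γ̃(1)) * r * γ̃(0). (Equivalently, the line integral of the 1-form α = 2Re(𝕚 conj(q) dq) along γ̃ equals 2·arg(conj(γ̃(1)) · Dihedral(p₀,p₁) · γ̃(0)) up to multiples of 4π.) -/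

import Mathlib

open Quaternion

noncomputable section

/-- The imaginary unit `𝕚` of the quaternions. -/
def qi : ℍ := ⟨0, 1, 0, 0⟩

/-- The dihedral quaternion `Dihedral(p,p') = (1 - p'*p)/‖1 - p'*p‖`. -/
def Dihedral (p p' : ℍ) : ℍ := ((1 : ℍ) - p' * p) / ((‖(1 : ℍ) - p' * p‖ : ℝ) : ℍ)

/-- The Euclidean inner product of purely imaginary quaternions. -/
def qdot (p p' : ℍ) : ℝ := -(p * p').re

/-- The cross product of purely imaginary quaternions. -/
def qcross (p p' : ℍ) : ℍ := (p * p' - p' * p) / 2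

theorem re_mul_comm (a b : ℍ) : (a * b).re = (b * a).re := by
  simp only [Quaternion.re_mul]; ring

theorem qi_re : qi.re = 0 := rfl
theorem qi_imI : qi.imI = 1 := rfl
theorem qi_imJ : qi.imJ = 0 := rfl
theorem qi_imK : qi.imK = 0 := rfl

theorem eq_smul_qi (x : ℍ) (h1 : star x = -x) (h2 : x * qi = qi * x) : x = x.imI • qi := by
  have hre : x.re = 0 := by
    have := congrArg QuaternionAlgebra.re h1
    simp at this; linarith
  have hJ := congrArg QuaternionAlgebra.imJ h2
  have hK := congrArg QuaternionAlgebra.imK h2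
  simp only [Quaternion.imJ_mul, Quaternion.imK_mul, qi_re, qi_imI, qi_imJ, qi_imK] at hJ hK
  ext <;> simp [qi_re, qi_imI, qi_imJ, qi_imK, hre] <;> linarith

theorem star_mul_self_one (a : ℍ) (h : ‖a‖ = 1) : star a * a = 1 := by
  rw [Quaternion.star_mul_self]
  have : Quaternion.normSq a = 1 := by
    rw [Quaternion.normSq_eq_norm_mul_self, h]; ring
  rw [this]; norm_num

theorem mul_star_self_one (a : ℍ) (h : ‖a‖ = 1) : a * star a = 1 := by
  rw [Quaternion.self_mul_star]
  have : Quaternion.normSq a = 1 := by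
    rw [Quaternion.normSq_eq_norm_mul_self, h]; ring
  rw [this]; norm_num

theorem qi_mul_smul_qi_re (b : ℝ) : (qi * (b • qi)).re = -b := by
  simp [qi_re, qi_imI, qi_imJ, qi_imK, Quaternion.re_mul]

theorem star_qi : star qi = -qi := by ext <;> simp [qi_re, qi_imI, qi_imJ, qi_imK]

theorem half_smul (y : ℍ) : y / 2 = (2:ℝ)⁻¹ • y := by
  rw [div_eq_mul_inv]
  have h2 : (2:ℍ) = ((2:ℝ):ℍ) := by norm_cast
  rw [h2, ← Quaternion.coe_inv, Quaternion.mul_coe_eq_smul]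

theorem qcross_re (p p' : ℍ) : (qcross p p').re = 0 := by
  rw [qcross, half_smul]
  simp only [Quaternion.re_smul, Quaternion.re_sub, smul_eq_mul]
  rw [re_mul_comm]; ring

theorem mul_qcross_re (p p' : ℍ) : (p * qcross p p').re = 0 := by
  rw [qcross, half_smul, mul_smul_comm]
  simp only [Quaternion.re_smul, smul_eq_mul, mul_sub, Quaternion.re_sub]
  rw [re_mul_comm p (p * p'), ← mul_assoc]
  ring

instance : StarModule ℝ ℍ :=
  ⟨fun r a => by rw [Quaternion.star_smul, star_trivial r]⟩

set_option maxHeartbeats 2000000 in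
theorem stmt_6 (p₀ p₁ : ℍ) (hp₀ : p₀.re = 0) (hp₁ : p₁.re = 0)
    (hn₀ : ‖p₀‖ = 1) (hn₁ : ‖p₁‖ = 1) (hne : p₁ ≠ p₀) (hna : p₁ ≠ -p₀)
    (r : ℍ) (hr : r = Dihedral p₀ p₁)
    (v : ℍ) (hv : v = Real.arccos (qdot p₀ p₁) • (‖qcross p₀ p₁‖⁻¹ • qcross p₀ p₁))
    (hrv : NormedSpace.exp ((1 / 2 : ℝ) • v) = r)
    (γ γ' : ℝ → ℍ)
    (hderiv : ∀ t ∈ Set.Icc (0 : ℝ) 1, HasDerivAt γ (γ' t) t)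
    (hcont : ContinuousOn γ' (Set.Icc (0 : ℝ) 1))
    (hunit : ∀ t ∈ Set.Icc (0 : ℝ) 1, ‖γ t‖ = 1)
    (hlift : ∀ t ∈ Set.Icc (0 : ℝ) 1,
      γ t * qi * star (γ t) =
        NormedSpace.exp ((t / 2) • v) * p₀ * NormedSpace.exp (-((t / 2) • v))) :
    NormedSpace.exp ((∫ t in (0 : ℝ)..1, (qi * star (γ t) * γ' t).re) • qi) =
      star (γ 1) * r * γ 0 := by
  have hIcc0 : (0:ℝ) ∈ Set.Icc (0:ℝ) 1 := by norm_num
  have hIcc1 : (1:ℝ) ∈ Set.Icc (0:ℝ) 1 := by norm_num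
  letI : NormedAlgebra ℚ ℍ := NormedAlgebra.restrictScalars ℚ ℝ ℍ
  -- facts about v
  have hvre : v.re = 0 := by
    rw [hv]; simp [Quaternion.re_smul, qcross_re]
  have hstarv : star v = -v := by ext <;> simp [hvre]
  have hp₀v : (p₀ * v).re = 0 := by
    rw [hv, mul_smul_comm, mul_smul_comm]
    simp [Quaternion.re_smul, mul_qcross_re p₀ p₁]
  -- the exponential path
  set x₀ : ℍ := (-(1/2) : ℝ) • v with hx₀
  set E : ℝ → ℍ := fun t => NormedSpace.exp (t • x₀) with hE
  have hstarsm : ∀ t : ℝ, star (t • x₀) = -(t • x₀) := by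
    intro t
    rw [Quaternion.star_smul, hx₀, Quaternion.star_smul, hstarv, smul_neg, smul_neg]
  have hEd : ∀ t, HasDerivAt E (E t * x₀) t := fun t => hasDerivAt_exp_smul_const x₀ t
  have hEx₀ : ∀ t, E t * x₀ = x₀ * E t := fun t =>
    (hasDerivAt_exp_smul_const x₀ t).unique (hasDerivAt_exp_smul_const' x₀ t)
  have hEstar : ∀ t : ℝ, star (E t) = NormedSpace.exp (-(t • x₀)) := by
    intro t
    show star (NormedSpace.exp (t • x₀)) = _
    rw [NormedSpace.star_exp, hstarsm]
  have hEmulstar : ∀ t, E t * star (E t) = 1 := by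
    intro t
    rw [hEstar]
    show NormedSpace.exp (t • x₀) * _ = 1
    rw [← NormedSpace.exp_add_of_commute (Commute.neg_right (Commute.refl _)),
      add_neg_cancel, NormedSpace.exp_zero]
  have hstarEmul : ∀ t, star (E t) * E t = 1 := by
    intro t
    rw [hEstar]
    show _ * NormedSpace.exp (t • x₀) = 1
    rw [← NormedSpace.exp_add_of_commute (Commute.neg_left (Commute.refl _)),
      neg_add_cancel, NormedSpace.exp_zero]
  have hE0 : E 0 = 1 := by
    show NormedSpace.exp ((0:ℝ) • x₀) = 1
    rw [zero_smul, NormedSpace.exp_zero]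
  -- rewrite the lift condition
  have hxt : ∀ t : ℝ, (t/2) • v = -(t • x₀) := by
    intro t
    rw [hx₀, smul_smul, ← neg_smul]
    congr 1; ring
  have hlift' : ∀ t ∈ Set.Icc (0:ℝ) 1, γ t * qi * star (γ t) = star (E t) * p₀ * E t := by
    intro t ht
    have e1 : NormedSpace.exp ((t/2) • v) = star (E t) := by rw [hEstar, hxt t]
    have e2 : NormedSpace.exp (-((t/2) • v)) = E t := by rw [hxt t, neg_neg]
    rw [hlift t ht, e1, e2]
  -- unit facts about γ
  have hγs : ∀ t ∈ Set.Icc (0:ℝ) 1, star (γ t) * γ t = 1 := fun t ht =>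
    star_mul_self_one _ (hunit t ht)
  have hγms : ∀ t ∈ Set.Icc (0:ℝ) 1, γ t * star (γ t) = 1 := fun t ht =>
    mul_star_self_one _ (hunit t ht)
  -- the comparison path u
  set u : ℝ → ℍ := fun t => star (γ 0) * (E t * γ t) with hu
  set u' : ℝ → ℍ := fun t => star (γ 0) * (E t * x₀ * γ t + E t * γ' t) with hu'
  have hud : ∀ t ∈ Set.Icc (0:ℝ) 1, HasDerivAt u (u' t) t := by
    intro t ht
    exact HasDerivAt.const_mul (star (γ 0)) ((hEd t).mul (hderiv t ht))
  have hustar : ∀ t ∈ Set.Icc (0:ℝ) 1, star (u t) * u t = 1 := by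
    intro t ht
    calc star (u t) * u t
        = (star (γ t) * star (E t)) * ((γ 0 * star (γ 0)) * (E t * γ t)) := by
          rw [hu]; simp only [star_mul, star_star, mul_assoc]
      _ = (star (γ t) * star (E t)) * (E t * γ t) := by rw [hγms 0 hIcc0, one_mul]
      _ = star (γ t) * ((star (E t) * E t) * γ t) := by simp only [mul_assoc]
      _ = star (γ t) * γ t := by rw [hstarEmul t, one_mul]
      _ = 1 := hγs t ht
  have humstar : ∀ t ∈ Set.Icc (0:ℝ) 1, u t * star (u t) = 1 := by
    intro t ht
    calc u t * star (u t)
        = star (γ 0) * (E t * ((γ t * star (γ t)) * (star (E t) * γ 0))) := by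
          rw [hu]; simp only [star_mul, star_star, mul_assoc]
      _ = star (γ 0) * (E t * (star (E t) * γ 0)) := by rw [hγms t ht, one_mul]
      _ = star (γ 0) * ((E t * star (E t)) * γ 0) := by simp only [mul_assoc]
      _ = star (γ 0) * γ 0 := by rw [hEmulstar t, one_mul]
      _ = 1 := hγs 0 hIcc0
  have hl0 : p₀ = γ 0 * qi * star (γ 0) := by
    have h := hlift' 0 hIcc0
    rw [hE0] at h
    simpa using h.symm
  have hui : ∀ t ∈ Set.Icc (0:ℝ) 1, u t * qi = qi * u t := by
    intro t ht
    have hmid : E t * ((star (E t) * p₀ * E t) * (star (E t) * γ 0)) = p₀ * γ 0 := by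
      calc E t * ((star (E t) * p₀ * E t) * (star (E t) * γ 0))
          = (E t * star (E t)) * (p₀ * ((E t * star (E t)) * γ 0)) := by
            simp only [mul_assoc]
        _ = p₀ * γ 0 := by rw [hEmulstar t, one_mul, one_mul]
    have key : u t * qi * star (u t) = qi := by
      calc u t * qi * star (u t)
          = star (γ 0) * (E t * ((γ t * qi * star (γ t)) * (star (E t) * γ 0))) := by
            rw [hu]; simp only [star_mul, star_star, mul_assoc]
        _ = star (γ 0) * (E t * ((star (E t) * p₀ * E t) * (star (E t) * γ 0))) := by
            rw [hlift' t ht]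
        _ = star (γ 0) * (p₀ * γ 0) := by rw [hmid]
        _ = star (γ 0) * ((γ 0 * qi * star (γ 0)) * γ 0) := by rw [← hl0]
        _ = (star (γ 0) * γ 0) * (qi * (star (γ 0) * γ 0)) := by simp only [mul_assoc]
        _ = qi := by rw [hγs 0 hIcc0, one_mul, mul_one]
    calc u t * qi = u t * qi * (star (u t) * u t) := by rw [hustar t ht, mul_one]
      _ = (u t * qi * star (u t)) * u t := by simp only [mul_assoc]
      _ = qi * u t := by rw [key]
  -- the clamp function and the integrand
  set c : ℝ → ℝ := fun s => min 1 (max 0 s) with hcdef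
  have hcmem : ∀ s, c s ∈ Set.Icc (0:ℝ) 1 :=
    fun s => ⟨le_min (by norm_num) (le_max_left 0 s), min_le_left 1 _⟩
  have hceq : ∀ s ∈ Set.Icc (0:ℝ) 1, c s = s := by
    intro s hs
    rw [hcdef]
    simp only
    rw [max_eq_right hs.1, min_eq_right hs.2]
  have hccont : Continuous c := continuous_const.min (continuous_const.max continuous_id)
  have hγcont : ContinuousOn γ (Set.Icc (0:ℝ) 1) := fun t ht =>
    (hderiv t ht).continuousAt.continuousWithinAt
  set Φ : ℝ → ℝ := fun s => -((qi * star (γ (c s)) * γ' (c s)).re) with hΦ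
  have hΦcont : Continuous Φ := by
    have h1 : Continuous fun s => γ (c s) := hγcont.comp_continuous hccont hcmem
    have h2 : Continuous fun s => γ' (c s) := hcont.comp_continuous hccont hcmem
    exact (Quaternion.continuous_re.comp ((continuous_const.mul h1.star).mul h2)).neg
  set Θ : ℝ → ℝ := fun t => ∫ s in (0:ℝ)..t, Φ s with hΘ
  have hΘd : ∀ t, HasDerivAt Θ (Φ t) t := fun t =>
    intervalIntegral.integral_hasDerivAt_right (hΦcont.intervalIntegrable _ _)
      (hΦcont.stronglyMeasurableAtFilter _ _) hΦcont.continuousAt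
  -- the key pointwise ODE
  have hkey : ∀ s ∈ Set.Ico (0:ℝ) 1, u' s = Φ s • (u s * qi) := by
    intro s hs
    have hsI : s ∈ Set.Icc (0:ℝ) 1 := ⟨hs.1, le_of_lt hs.2⟩
    have hUD : UniqueDiffWithinAt ℝ (Set.Ici s) s := uniqueDiffOn_Ici s s Set.self_mem_Ici
    have hmem : Set.Icc (0:ℝ) 1 ∈ nhdsWithin s (Set.Ici s) := by
      have h1 : Set.Iio (1:ℝ) ∈ nhds s := Iio_mem_nhds hs.2
      refine Filter.mem_of_superset
        (Filter.inter_mem (mem_nhdsWithin_of_mem_nhds h1) self_mem_nhdsWithin) ?_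
      rintro x ⟨hx1, hx2⟩
      exact ⟨le_trans hs.1 hx2, le_of_lt hx1⟩
    -- star u * u is constant, so its derivative vanishes
    have hA : HasDerivWithinAt (fun t => star (u t) * u t)
        (star (u' s) * u s + star (u s) * u' s) (Set.Ici s) s :=
      (((hud s hsI).star.mul (hud s hsI))).hasDerivWithinAt
    have hB : HasDerivWithinAt (fun t => star (u t) * u t) 0 (Set.Ici s) s := by
      refine (hasDerivWithinAt_const s (Set.Ici s) (1:ℍ)).congr_of_eventuallyEq ?_ ?_
      · filter_upwards [hmem] with x hx
        rw [hustar x hx]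
      · rw [hustar s hsI]
    have heq1 : star (u' s) * u s + star (u s) * u' s = 0 := by
      rw [← hA.derivWithin hUD, hB.derivWithin hUD]
    -- u commutes with qi, so its derivative does too
    have hC : HasDerivWithinAt (fun t => u t * qi - qi * u t)
        (u' s * qi - qi * u' s) (Set.Ici s) s :=
      (((hud s hsI).mul_const qi).sub ((hud s hsI).const_mul qi)).hasDerivWithinAt
    have hD : HasDerivWithinAt (fun t => u t * qi - qi * u t) 0 (Set.Ici s) s := by
      refine (hasDerivWithinAt_const s (Set.Ici s) (0:ℍ)).congr_of_eventuallyEq ?_ ?_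
      · filter_upwards [hmem] with x hx
        rw [hui x hx, sub_self]
      · rw [hui s hsI, sub_self]
    have heq2 : u' s * qi = qi * u' s := by
      have := hC.derivWithin hUD
      rw [hD.derivWithin hUD] at this
      exact sub_eq_zero.mp this.symm
    -- structure of the pullback velocity y
    set y : ℍ := star (u s) * u' s with hy
    have hy1 : star y = -y := by
      have h1 : star y = star (u' s) * u s := by rw [hy, star_mul, star_star]
      rw [h1]
      exact eq_neg_of_add_eq_zero_left heq1
    have hsu : star (u s) * qi = qi * star (u s) := by
      have h := congrArg star (hui s hsI)
      rw [star_mul (u s) qi, star_mul qi (u s), star_qi, neg_mul, mul_neg, neg_inj] at h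
      exact h.symm
    have hy2 : y * qi = qi * y := by
      rw [hy, mul_assoc, heq2, ← mul_assoc, hsu, mul_assoc]
    have hy3 : y = y.imI • qi := eq_smul_qi y hy1 hy2
    -- identify the coefficient
    have h5 : y = star (γ s) * (x₀ * γ s) + star (γ s) * γ' s := by
      calc y = (star (γ s) * star (E s)) *
            ((γ 0 * star (γ 0)) * (E s * x₀ * γ s + E s * γ' s)) := by
            rw [hy, hu, hu']; simp only [star_mul, star_star, mul_assoc]
        _ = (star (γ s) * star (E s)) * (E s * x₀ * γ s + E s * γ' s) := by
            rw [hγms 0 hIcc0, one_mul]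
        _ = star (γ s) * (star (E s) * (E s * (x₀ * γ s)))
              + star (γ s) * (star (E s) * (E s * γ' s)) := by
            rw [mul_add]; simp only [mul_assoc]
        _ = star (γ s) * (x₀ * γ s) + star (γ s) * γ' s := by
            rw [← mul_assoc (star (E s)) (E s), hstarEmul s, one_mul,
              ← mul_assoc (star (E s)) (E s), hstarEmul s, one_mul]
    have h6 : (qi * (star (γ s) * (x₀ * γ s))).re = 0 := by
      calc (qi * (star (γ s) * (x₀ * γ s))).re
          = ((qi * star (γ s) * x₀) * γ s).re := by simp only [mul_assoc]
        _ = (γ s * (qi * star (γ s) * x₀)).re := re_mul_comm _ _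
        _ = ((γ s * qi * star (γ s)) * x₀).re := by simp only [mul_assoc]
        _ = ((star (E s) * p₀ * E s) * x₀).re := by rw [hlift' s hsI]
        _ = ((star (E s) * (p₀ * x₀)) * E s).re := by
            simp only [mul_assoc]; rw [hEx₀ s]
        _ = (E s * (star (E s) * (p₀ * x₀))).re := (re_mul_comm _ _).symm
        _ = (p₀ * x₀).re := by rw [← mul_assoc, hEmulstar s, one_mul]
        _ = 0 := by
            rw [hx₀, mul_smul_comm]
            simp [Quaternion.re_smul, hp₀v]
    have h7 : (qi * y).re = (qi * star (γ s) * γ' s).re := by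
      rw [h5, mul_add, Quaternion.re_add, h6, zero_add]
      simp only [mul_assoc]
    have h4 : (qi * y).re = -y.imI := by
      conv_lhs => rw [hy3]
      exact qi_mul_smul_qi_re y.imI
    have hyval : y = Φ s • qi := by
      have h8 : Φ s = -((qi * star (γ s) * γ' s).re) := by
        rw [hΦ]; simp only; rw [hceq s hsI]
      rw [hy3, h8, ← h7, h4, neg_neg]
    have h9 : u' s = u s * y := by
      rw [hy, ← mul_assoc, humstar s hsI, one_mul]
    rw [h9, hyval, mul_smul_comm]
  -- the auxiliary function F is constant
  set F : ℝ → ℍ := fun t => u t * NormedSpace.exp ((-(Θ t)) • qi) with hF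
  have hqiE : ∀ a : ℝ, NormedSpace.exp (a • qi) * qi = qi * NormedSpace.exp (a • qi) :=
    fun a => (hasDerivAt_exp_smul_const qi a).unique (hasDerivAt_exp_smul_const' qi a)
  have hexpd : ∀ t, HasDerivAt (fun t => NormedSpace.exp ((-(Θ t)) • qi))
      ((-(Φ t)) • (NormedSpace.exp ((-(Θ t)) • qi) * qi)) t := by
    intro t
    have h1 : HasDerivAt (fun y : ℝ => NormedSpace.exp (y • qi))
        (NormedSpace.exp ((-(Θ t)) • qi) * qi) (-(Θ t)) := hasDerivAt_exp_smul_const qi _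
    have h2 : HasDerivAt (fun t => -(Θ t)) (-(Φ t)) t := (hΘd t).neg
    exact h1.scomp t h2
  have hFd : ∀ x ∈ Set.Ico (0:ℝ) 1, HasDerivWithinAt F 0 (Set.Ici x) x := by
    intro x hx
    have hxI : x ∈ Set.Icc (0:ℝ) 1 := ⟨hx.1, le_of_lt hx.2⟩
    have h1 := (hud x hxI).mul (hexpd x)
    have h2 : u' x * NormedSpace.exp ((-(Θ x)) • qi)
        + u x * ((-(Φ x)) • (NormedSpace.exp ((-(Θ x)) • qi) * qi)) = 0 := by
      rw [hkey x hx]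
      rw [hqiE (-(Θ x))]
      rw [smul_mul_assoc (Φ x) (u x * qi) (NormedSpace.exp ((-(Θ x)) • qi))]
      rw [mul_smul_comm (-(Φ x)) (u x) (qi * NormedSpace.exp ((-(Θ x)) • qi))]
      rw [mul_assoc (u x) qi (NormedSpace.exp ((-(Θ x)) • qi))]
      rw [← add_smul, add_neg_cancel, zero_smul]
    rw [h2] at h1
    exact h1.hasDerivWithinAt
  have hFcont : ContinuousOn F (Set.Icc (0:ℝ) 1) := by
    have hu_cont : ContinuousOn u (Set.Icc (0:ℝ) 1) := fun t ht =>
      (hud t ht).continuousAt.continuousWithinAt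
    have hΘc : Continuous Θ := continuous_iff_continuousAt.mpr fun t => (hΘd t).continuousAt
    have hec : Continuous fun t => NormedSpace.exp ((-(Θ t)) • qi) :=
      NormedSpace.exp_continuous.comp (hΘc.neg.smul continuous_const)
    exact hu_cont.mul hec.continuousOn
  have hconst : F 1 = F 0 := constant_of_has_deriv_right_zero hFcont hFd 1 hIcc1
  have hF0 : F 0 = 1 := by
    have hΘ0 : Θ 0 = 0 := intervalIntegral.integral_same
    have hu0 : u 0 = 1 := by simp only [hu]; rw [hE0, one_mul, hγs 0 hIcc0]
    simp only [hF]
    rw [hΘ0, hu0, neg_zero, zero_smul, NormedSpace.exp_zero, mul_one]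
  have hu1 : u 1 = NormedSpace.exp ((Θ 1) • qi) := by
    have h1 : u 1 * NormedSpace.exp ((-(Θ 1)) • qi) = 1 := by
      have h := hconst
      rw [hF0] at h
      exact h
    have h2 : NormedSpace.exp ((-(Θ 1)) • qi) * NormedSpace.exp ((Θ 1) • qi) = 1 := by
      rw [← NormedSpace.exp_add_of_commute (((Commute.refl qi).smul_left _).smul_right _),
        ← add_smul, neg_add_cancel, zero_smul, NormedSpace.exp_zero]
    calc u 1 = u 1 * (NormedSpace.exp ((-(Θ 1)) • qi) * NormedSpace.exp ((Θ 1) • qi)) := by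
          rw [h2, mul_one]
      _ = (u 1 * NormedSpace.exp ((-(Θ 1)) • qi)) * NormedSpace.exp ((Θ 1) • qi) := by
          rw [mul_assoc (u 1)]
      _ = NormedSpace.exp ((Θ 1) • qi) := by rw [h1, one_mul]
  -- identify the integral
  have hΘ1 : -(Θ 1) = ∫ t in (0:ℝ)..1, (qi * star (γ t) * γ' t).re := by
    simp only [hΘ]
    rw [← intervalIntegral.integral_neg]
    apply intervalIntegral.integral_congr
    intro s hs
    have hs' : s ∈ Set.Icc (0:ℝ) 1 := by
      rwa [Set.uIcc_of_le (by norm_num : (0:ℝ) ≤ 1)] at hs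
    simp only [hΦ, neg_neg]
    rw [hceq s hs']
  -- conclude
  have hfin : NormedSpace.exp ((-(Θ 1)) • qi) = star (u 1) := by
    rw [hu1, NormedSpace.star_exp]
    congr 1
    rw [Quaternion.star_smul, star_qi, smul_neg, neg_smul]
  have hstarE1 : star (E 1) = r := by
    rw [hEstar 1, ← hrv]
    congr 1
    rw [← hxt 1]
  have hu1star : star (u 1) = star (γ 1) * r * γ 0 := by
    calc star (u 1) = (star (γ 1) * star (E 1)) * γ 0 := by
          rw [hu]; simp only [star_mul, star_star, mul_assoc]
      _ = star (γ 1) * r * γ 0 := by rw [hstarE1, mul_assoc]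
  rw [← hΘ1, hfin, hu1star]
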